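/- Let Z_1,...,Z_n, Z be exchangeable real-valued random variables with almost surely distinct values and F_n the empirical CDF of Z_1,...,Z_n. Then for 0 ≤ a ≤ b ≤ 1, P(F_n(Z) ∈ [a,b]) = (⌊nb⌋ − ⌈na⌉ + 1)/(n+1). -/

import Mathlib

/-!
The rank of `Z = Z_{n+1}` among the `n + 1` variables, i.e. the number of coordinates strictly
below it, equals `n F_n(Z)` whenever the values are distinct. By exchangeability every coordinate
has the same rank distribution, and almost surely each value `k ≤ n` is the rank of exactly one
coordinate, so the rank of `Z` is uniform on `{0, …, n}`. The event `F_n(Z) ∈ [a, b]` is the event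
that this rank lies in `[⌈na⌉, ⌊nb⌋]`.
-/

open MeasureTheory Finset
open scoped ENNReal

section Rank

variable {ι α : Type*} [Fintype ι] [LinearOrder α]

def rank (v : ι → α) (j : ι) : ℕ := #{i | v i < v j}

lemma rank_lt_card (v : ι → α) (j : ι) : rank v j < Fintype.card ι :=
  card_lt_univ_of_notMem (x := j) (by simp)

lemma rank_lt_rank {v : ι → α} {i j : ι} (h : v i < v j) : rank v i < rank v j := by
  refine card_lt_card ((ssubset_iff_of_subset fun l hl => ?_).mpr ⟨i, ?_, ?_⟩)
  · simp only [mem_filter, mem_univ, true_and] at hl ⊢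
    exact hl.trans h
  · simpa using h
  · simp

lemma rank_injective {v : ι → α} (hv : Function.Injective v) : Function.Injective (rank v) := by
  intro i j h
  by_contra hne
  rcases (hv.ne hne).lt_or_gt with hlt | hlt
  · exact (rank_lt_rank hlt).ne h
  · exact (rank_lt_rank hlt).ne' h

lemma card_filter_rank_eq_one {v : ι → α} (hv : Function.Injective v) {k : ℕ}
    (hk : k < Fintype.card ι) : #{j | rank v j = k} = 1 := by
  let r : ι → Fin (Fintype.card ι) := fun j => ⟨rank v j, rank_lt_card v j⟩
  have hr : Function.Bijective r :=
    (Fintype.bijective_iff_injective_and_card r).mpr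
      ⟨fun i j h => rank_injective hv (congrArg Fin.val h), by simp⟩
  obtain ⟨j, hj⟩ := hr.surjective ⟨k, hk⟩
  rw [card_eq_one]
  refine ⟨j, eq_singleton_iff_unique_mem.mpr ⟨by simpa [r] using hj, fun i hi => ?_⟩⟩
  exact hr.injective (Fin.ext ((mem_filter.mp hi).2.trans (congrArg Fin.val hj).symm))

lemma rank_comp_perm (v : ι → α) (σ : Equiv.Perm ι) (j : ι) :
    rank (fun i => v (σ i)) j = rank v (σ j) :=
  card_equiv σ (by simp)

lemma rank_last_eq_card_filter_castSucc_le {n : ℕ} {v : Fin (n + 1) → α}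
    (hv : Function.Injective v) :
    rank v (Fin.last n) = #{i : Fin n | v i.castSucc ≤ v (Fin.last n)} := by
  have hlt (i : Fin n) : v i.castSucc ≤ v (Fin.last n) ↔ v i.castSucc < v (Fin.last n) :=
    (hv.ne (Fin.castSucc_lt_last i).ne).le_iff_lt
  simp only [rank, hlt, card_filter, Fin.sum_univ_castSucc, lt_self_iff_false, if_false,
    add_zero]

variable [TopologicalSpace α] [MeasurableSpace α] [OpensMeasurableSpace α]
  [OrderClosedTopology α] [SecondCountableTopology α]

lemma measurable_rank (j : ι) : Measurable fun v : ι → α => rank v j := by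
  simp only [rank, card_filter]
  exact Finset.measurable_sum _ fun i _ => Measurable.ite
    (measurableSet_lt (measurable_pi_apply i) (measurable_pi_apply j))
    measurable_const measurable_const

end Rank

section RankDistribution

variable {Ω ι α : Type*} [MeasurableSpace Ω] [MeasurableSpace α]

def Exchangeable (X : Ω → ι → α) (P : Measure Ω) : Prop :=
  ∀ σ : Equiv.Perm ι, P.map (fun ω i => X ω (σ i)) = P.map X

variable {P : Measure Ω} [Fintype ι] [LinearOrder α] [TopologicalSpace α]
  [OpensMeasurableSpace α] [OrderClosedTopology α] [SecondCountableTopology α] {X : Ω → ι → α}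

lemma measure_rank_eq_of_exchangeable (hX : Measurable X)
    (hexch : Exchangeable X P) (j j' : ι) (k : ℕ) :
    P {ω | rank (X ω) j = k} = P {ω | rank (X ω) j' = k} := by
  classical
  let σ := Equiv.swap j j'
  have hS : MeasurableSet {v : ι → α | rank v j' = k} :=
    measurable_rank j' (measurableSet_singleton k)
  have hσX : Measurable fun ω i => X ω (σ i) :=
    measurable_pi_lambda _ fun i => (measurable_pi_apply (σ i)).comp hX
  calc P {ω | rank (X ω) j = k} = P.map (fun ω i => X ω (σ i)) {v | rank v j' = k} := by
        rw [Measure.map_apply hσX hS]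
        simp only [Set.preimage_ofPred_eq, rank_comp_perm, σ, Equiv.swap_apply_right]
    _ = P.map X {v | rank v j' = k} := by rw [hexch]
    _ = P {ω | rank (X ω) j' = k} := Measure.map_apply hX hS

variable [IsProbabilityMeasure P]

lemma sum_measure_rank_eq_one (hX : Measurable X) (hinj : ∀ᵐ ω ∂P, Function.Injective (X ω))
    {k : ℕ} (hk : k < Fintype.card ι) : ∑ j, P {ω | rank (X ω) j = k} = 1 := by
  have hmeas (j : ι) : MeasurableSet {ω | rank (X ω) j = k} :=
    ((measurable_rank j).comp hX) (measurableSet_singleton k)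
  calc ∑ j, P {ω | rank (X ω) j = k}
      = ∫⁻ ω, ∑ j, {ω | rank (X ω) j = k}.indicator 1 ω ∂P := by
        rw [lintegral_finsetSum _ fun j _ => measurable_one.indicator (hmeas j)]
        exact Finset.sum_congr rfl fun j _ => (lintegral_indicator_one (hmeas j)).symm
    _ = ∫⁻ _, 1 ∂P := lintegral_congr_ae <| hinj.mono fun ω hω => by
        simp [Set.indicator_apply, card_filter_rank_eq_one hω hk]
    _ = 1 := by simp

lemma measure_rank_eq_inv_card (hX : Measurable X)
    (hexch : Exchangeable X P)
    (hinj : ∀ᵐ ω ∂P, Function.Injective (X ω)) (j : ι) {k : ℕ} (hk : k < Fintype.card ι) :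
    P {ω | rank (X ω) j = k} = (Fintype.card ι : ℝ≥0∞)⁻¹ := by
  refine ENNReal.eq_inv_of_mul_eq_one_left ?_
  calc P {ω | rank (X ω) j = k} * Fintype.card ι = ∑ j' : ι, P {ω | rank (X ω) j' = k} := by
        rw [Finset.sum_congr rfl fun j' _ => measure_rank_eq_of_exchangeable hX hexch j' j k]
        simp [mul_comm]
    _ = 1 := sum_measure_rank_eq_one hX hinj hk

lemma measure_rank_mem_eq (hX : Measurable X)
    (hexch : Exchangeable X P)
    (hinj : ∀ᵐ ω ∂P, Function.Injective (X ω)) (j : ι) {K : Finset ℕ}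
    (hK : ∀ k ∈ K, k < Fintype.card ι) :
    P {ω | rank (X ω) j ∈ K} = #K / Fintype.card ι := by
  have hmeas (k : ℕ) : MeasurableSet {ω | rank (X ω) j = k} :=
    ((measurable_rank j).comp hX) (measurableSet_singleton k)
  change P ((fun ω => rank (X ω) j) ⁻¹' K) = _
  rw [← sum_measure_preimage_singleton K fun k _ => hmeas k]
  calc ∑ k ∈ K, P ((fun ω => rank (X ω) j) ⁻¹' {k})
      = ∑ _k ∈ K, (Fintype.card ι : ℝ≥0∞)⁻¹ :=
        Finset.sum_congr rfl fun k hk => measure_rank_eq_inv_card hX hexch hinj j (hK k hk)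
    _ = #K / Fintype.card ι := by rw [sum_const, nsmul_eq_mul, div_eq_mul_inv]

end RankDistribution

lemma div_mem_Icc_iff_mem_Icc_ceil_floor {x a b : ℝ} (hx : 0 < x) (hb : 0 ≤ b) (r : ℕ) :
    (r : ℝ) / x ∈ Set.Icc a b ↔ r ∈ Finset.Icc ⌈x * a⌉₊ ⌊x * b⌋₊ := by
  rw [Set.mem_Icc, Finset.mem_Icc, Nat.ceil_le, Nat.le_floor_iff (by positivity),
    le_div_iff₀ hx, div_le_iff₀ hx, mul_comm a, mul_comm b]

lemma natCast_card_Icc_ceil_floor {a b : ℝ} (ha : 0 ≤ a) (hab : a ≤ b) :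
    (#(Finset.Icc ⌈a⌉₊ ⌊b⌋₊) : ℤ) = ⌊b⌋ - ⌈a⌉ + 1 := by
  have hle : ⌈a⌉₊ ≤ ⌊b⌋₊ + 1 := (Nat.ceil_mono hab).trans (Nat.ceil_le_floor_add_one b)
  rw [Nat.card_Icc, ← Int.natCast_floor_eq_floor (ha.trans hab), ← Int.natCast_ceil_eq_ceil ha]
  omega

theorem stmt1 {Ω : Type*} [MeasurableSpace Ω] (P : Measure Ω) [IsProbabilityMeasure P]
    (n : ℕ) (hn : 0 < n) (Z : Fin (n + 1) → Ω → ℝ) (hZ : ∀ i, Measurable (Z i))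
    (hexch : ∀ σ : Equiv.Perm (Fin (n + 1)),
      Measure.map (fun ω i => Z (σ i) ω) P = Measure.map (fun ω i => Z i ω) P)
    (hdist : ∀ᵐ ω ∂P, Function.Injective (fun i => Z i ω))
    (Fn : Ω → ℝ → ℝ)
    (hFn : ∀ ω z, Fn ω z =
      ((univ.filter (fun i : Fin n => Z i.castSucc ω ≤ z)).card : ℝ) / n)
    (a b : ℝ) (ha : 0 ≤ a) (hab : a ≤ b) (hb : b ≤ 1) :
    P {ω | Fn ω (Z (Fin.last n) ω) ∈ Set.Icc a b} =
      ENNReal.ofReal (((⌊(n : ℝ) * b⌋ - ⌈(n : ℝ) * a⌉ + 1 : ℤ) : ℝ) / (n + 1)) := by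
  have hX : Measurable fun ω i => Z i ω := measurable_pi_lambda _ hZ
  set K := Finset.Icc ⌈(n : ℝ) * a⌉₊ ⌊(n : ℝ) * b⌋₊
  have hK : ∀ k ∈ K, k < Fintype.card (Fin (n + 1)) := fun k hk => by
    rw [Fintype.card_fin, Nat.lt_succ_iff]
    exact (Finset.mem_Icc.mp hk).2.trans
      (Nat.floor_le_of_le (mul_le_of_le_one_right n.cast_nonneg hb))
  have hae : {ω | Fn ω (Z (Fin.last n) ω) ∈ Set.Icc a b}
      =ᵐ[P] {ω | rank (fun i => Z i ω) (Fin.last n) ∈ K} := by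
    refine Filter.eventuallyEq_set.mpr (hdist.mono fun ω hω => ?_)
    rw [Set.mem_ofPred_eq, Set.mem_ofPred_eq, hFn, ← rank_last_eq_card_filter_castSucc_le hω,
      div_mem_Icc_iff_mem_Icc_ceil_floor (by exact_mod_cast hn) (ha.trans hab)]
  have hcard := natCast_card_Icc_ceil_floor (mul_nonneg n.cast_nonneg ha)
    (mul_le_mul_of_nonneg_left hab n.cast_nonneg)
  rw [measure_congr hae, measure_rank_mem_eq hX hexch hdist _ hK, Fintype.card_fin, ← hcard,
    Int.cast_natCast, ENNReal.ofReal_div_of_pos (by positivity), ENNReal.ofReal_natCast]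
  norm_cast
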